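/- Let h ∈ K̄[z] be nonzero with a part-p-th-power decomposition h = q^p + ρ satisfying t := v(ρ) − v(h) < p·v(p)/(p−1), where v is the Gauss valuation. Then there is no decomposition h = q₁^p + ρ₁ with v(ρ₁) − v(h) > t if and only if the normalized reduction of ρ (the reduction of γ^{-1}ρ to the residue field, for any scalar γ with v(γ) = v(ρ)) is not a p-th power of a polynomial over the residue field. -/

import Mathlib

/-!
The Gauss valuation is multiplicative: for the largest index at which a coefficient attains the
minimal valuation (the degree of the normalized reduction) the products of the extremal
coefficients cannot cancel. Hence it is an `AddValuation` on `K[X]`, and everything else is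
ultrametric bookkeeping.

If `ρ = s^p + ρ₀` with `v(ρ₀) > v(ρ)`, the reduction of `s^p` is that of `ρ`, so `s` may be
truncated to degree `≤ ⌊deg h / p⌋`; then `h = (q + s)^p + ρ₁` with
`ρ₁ = ρ₀ - ((q + s)^p - q^p - s^p)`, and the binomial middle terms, all divisible by `p`, have
valuation `> v(ρ)` precisely because `t < p v(p)/(p-1)`. Conversely, if `h = q₁^p + ρ₁` with
`v(ρ₁) > v(ρ)`, then `ρ - ρ₁ = ∏_μ (q₁ - μ q)` over the `p`-th roots of unity `μ`. As
`v(μ - μ') ≥ v(1 - ζ) = v(p)/(p-1)`, either every factor differs from a factor `δ` of least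
valuation by a term of larger valuation, and then `ρ ≡ δ^p`, or `t ≥ p v(p)/(p-1)`.
When `t < 0` both conditions fail: `(0, h)` is a better decomposition, and
`ρ = (ω q)^p + h` with `ω^p = -1`.
-/

open Polynomial
open scoped Classical

/-- An additive ℚ-valued valuation on a field `K`, recorded as a bare function with
the valuation axioms imposed only at nonzero elements (the value at `0` is junk). -/
structure AddVal (K : Type*) [Field K] where
  v : K → ℚ
  map_one : v 1 = 0
  map_mul : ∀ x y : K, x ≠ 0 → y ≠ 0 → v (x * y) = v x + v y
  add_ge : ∀ x y : K, x ≠ 0 → y ≠ 0 → x + y ≠ 0 → min (v x) (v y) ≤ v (x + y)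

variable {K : Type*} [Field K]

/-- The Gauss valuation of a polynomial: the minimum of the valuations of its
(nonzero) coefficients, with junk value `0` at the zero polynomial. -/
noncomputable def AddVal.gauss (w : AddVal K) (h : K[X]) : ℚ :=
  if hh : h = 0 then 0
  else h.support.inf' (Polynomial.support_nonempty.mpr hh) fun i => w.v (h.coeff i)

/-- Gauss valuation valued in `ℚ ∪ {∞}`, taking the value `⊤` at the zero polynomial. -/
noncomputable def AddVal.gaussT (w : AddVal K) (h : K[X]) : WithTop ℚ :=
  if h = 0 then ⊤ else (w.gauss h : WithTop ℚ)

/-- The quantity `t = v(ρ) - v(h) ∈ ℚ ∪ {∞}` attached to a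
part-`p`-th-power decomposition `h = q^p + ρ` (it is `⊤` when `ρ = 0`). -/
noncomputable def AddVal.tdiff (w : AddVal K) (h ρ : K[X]) : WithTop ℚ :=
  if ρ = 0 then ⊤ else ((w.gauss ρ - w.gauss h : ℚ) : WithTop ℚ)

/-- `h = q ^ p + ρ` is a part-`p`-th-power decomposition (`deg q ≤ ⌊deg h / p⌋`). -/
def IsPartDecomp (p : ℕ) (h q ρ : K[X]) : Prop :=
  h = q ^ p + ρ ∧ q.natDegree ≤ h.natDegree / p

/-- The threshold `p·v(p)/(p-1)`. -/
noncomputable def pBound (w : AddVal K) (p : ℕ) : ℚ :=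
  (p : ℚ) * w.v (p : K) / ((p : ℚ) - 1)

/-- A part-`p`-th-power decomposition is good if `t ≥ p·v(p)/(p-1)` or if no
decomposition achieves a strictly larger value of `t = v(ρ) - v(h)`. -/
def IsGoodDecomp (w : AddVal K) (p : ℕ) (h q ρ : K[X]) : Prop :=
  IsPartDecomp p h q ρ ∧
    (((pBound w p : ℚ) : WithTop ℚ) ≤ w.tdiff h ρ ∨
      ∀ q₁ ρ₁ : K[X], IsPartDecomp p h q₁ ρ₁ → w.tdiff h ρ₁ ≤ w.tdiff h ρ)

namespace AddVal

variable (w : AddVal K)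

noncomputable def val : AddValuation K (WithTop ℚ) :=
  AddValuation.of (fun x => if x = 0 then ⊤ else (w.v x : WithTop ℚ)) (by simp)
    (by simp [w.map_one])
    (fun x y => by
      by_cases hx : x = 0
      · simp [hx]
      by_cases hy : y = 0
      · simp [hy]
      by_cases hxy : x + y = 0
      · simp [hxy]
      simp only [hx, hy, hxy, if_false]
      exact_mod_cast w.add_ge x y hx hy hxy)
    (fun x y => by
      by_cases hx : x = 0
      · simp [hx]
      by_cases hy : y = 0
      · simp [hy]
      simp [hx, hy, w.map_mul x y hx hy])

lemma val_of_ne_zero {x : K} (hx : x ≠ 0) : w.val x = w.v x := if_neg hx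

lemma gaussT_of_ne_zero {f : K[X]} (hf : f ≠ 0) : w.gaussT f = w.gauss f := if_neg hf

@[simp]
lemma gaussT_zero : w.gaussT 0 = ⊤ := if_pos rfl

lemma gaussT_ne_top {f : K[X]} (hf : f ≠ 0) : w.gaussT f ≠ ⊤ := by
  simp [w.gaussT_of_ne_zero hf]

lemma gaussT_le_val_coeff (f : K[X]) (i : ℕ) : w.gaussT f ≤ w.val (f.coeff i) := by
  by_cases hi : f.coeff i = 0
  · simp [hi]
  have hf : f ≠ 0 := by rintro rfl; simp at hi
  rw [w.gaussT_of_ne_zero hf, w.val_of_ne_zero hi, gauss, dif_neg hf, WithTop.coe_le_coe]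
  exact Finset.inf'_le _ (mem_support_iff.2 hi)

lemma exists_val_coeff_eq_gaussT (f : K[X]) : ∃ i, w.val (f.coeff i) = w.gaussT f := by
  by_cases hf : f = 0
  · exact ⟨0, by simp [hf, gaussT]⟩
  obtain ⟨i, hi, he⟩ :=
    Finset.exists_mem_eq_inf' (support_nonempty.2 hf) fun i => w.v (f.coeff i)
  refine ⟨i, ?_⟩
  rw [w.gaussT_of_ne_zero hf, w.val_of_ne_zero (mem_support_iff.1 hi), gauss, dif_neg hf, he]

lemma le_gaussT_iff {f : K[X]} {g : WithTop ℚ} :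
    g ≤ w.gaussT f ↔ ∀ i, g ≤ w.val (f.coeff i) := by
  refine ⟨fun h i => h.trans (w.gaussT_le_val_coeff f i), fun h => ?_⟩
  obtain ⟨i, hi⟩ := w.exists_val_coeff_eq_gaussT f
  exact hi ▸ h i

lemma gaussT_C (c : K) : w.gaussT (C c) = w.val c := by
  refine le_antisymm (by simpa using w.gaussT_le_val_coeff (C c) 0) (w.le_gaussT_iff.2 fun i => ?_)
  rw [coeff_C]
  split_ifs <;> simp

lemma min_le_gaussT_add (f g : K[X]) : min (w.gaussT f) (w.gaussT g) ≤ w.gaussT (f + g) :=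
  w.le_gaussT_iff.2 fun i => (min_le_min (w.gaussT_le_val_coeff f i)
    (w.gaussT_le_val_coeff g i)).trans (by rw [coeff_add]; exact w.val.map_add _ _)

/-- `d` is the degree of the normalized reduction of `f`. -/
def IsTopIndex (f : K[X]) (d : ℕ) : Prop :=
  w.val (f.coeff d) = w.gaussT f ∧ ∀ i, d < i → w.gaussT f < w.val (f.coeff i)

lemma exists_isTopIndex {f : K[X]} (hf : f ≠ 0) : ∃ d, w.IsTopIndex f d := by
  set S := f.support.filter fun i => w.val (f.coeff i) = w.gaussT f
  have hS : S.Nonempty := by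
    obtain ⟨i, hi⟩ := w.exists_val_coeff_eq_gaussT f
    refine ⟨i, Finset.mem_filter.2 ⟨mem_support_iff.2 fun h0 => ?_, hi⟩⟩
    simp [h0, eq_comm, w.gaussT_ne_top hf] at hi
  refine ⟨S.max' hS, (Finset.mem_filter.1 (S.max'_mem hS)).2, fun i hi => ?_⟩
  refine (w.gaussT_le_val_coeff f i).lt_of_ne fun he => hi.not_ge (S.le_max' i ?_)
  refine Finset.mem_filter.2 ⟨mem_support_iff.2 fun h0 => ?_, he.symm⟩
  simp [h0, w.gaussT_ne_top hf] at he

lemma isTopIndex_one : w.IsTopIndex 1 0 := by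
  refine ⟨by simpa using (w.gaussT_C 1).symm, fun i hi => ?_⟩
  rw [coeff_one, if_neg hi.ne', w.val.map_zero, ← C_1, w.gaussT_C, w.val.map_one]
  exact WithTop.coe_lt_top 0

namespace IsTopIndex

variable {w} {f g : K[X]} {a b : ℕ}

lemma gaussT_ne_top (hf : w.IsTopIndex f a) : w.gaussT f ≠ ⊤ :=
  (hf.2 (a + 1) a.lt_succ_self).ne_top

lemma lt_val_coeff_mul_coeff (hf : w.IsTopIndex f a) (hg : w.IsTopIndex g b) {x y : ℕ}
    (hxy : a < x ∨ b < y) : w.gaussT f + w.gaussT g < w.val (f.coeff x * g.coeff y) := by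
  rw [w.val.map_mul]
  rcases hxy with hx | hy
  · exact WithTop.add_lt_add_of_lt_of_le hg.gaussT_ne_top (hf.2 x hx) (w.gaussT_le_val_coeff g y)
  · exact WithTop.add_lt_add_of_le_of_lt hf.gaussT_ne_top (w.gaussT_le_val_coeff f x) (hg.2 y hy)

lemma mul (hf : w.IsTopIndex f a) (hg : w.IsTopIndex g b) :
    w.gaussT (f * g) = w.gaussT f + w.gaussT g ∧ w.IsTopIndex (f * g) (a + b) := by
  have hne : w.gaussT f + w.gaussT g ≠ ⊤ :=
    WithTop.add_ne_top.2 ⟨hf.gaussT_ne_top, hg.gaussT_ne_top⟩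
  have hle : w.gaussT f + w.gaussT g ≤ w.gaussT (f * g) := w.le_gaussT_iff.2 fun n => by
    rw [coeff_mul]
    refine w.val.map_le_sum fun x _ => ?_
    rw [w.val.map_mul]
    exact add_le_add (w.gaussT_le_val_coeff f _) (w.gaussT_le_val_coeff g _)
  have htop : w.val ((f * g).coeff (a + b)) = w.gaussT f + w.gaussT g := by
    have hab : (a, b) ∈ Finset.HasAntidiagonal.antidiagonal (a + b) :=
      Finset.HasAntidiagonal.mem_antidiagonal.2 rfl
    have hv : w.val (f.coeff a * g.coeff b) = w.gaussT f + w.gaussT g := by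
      rw [w.val.map_mul, hf.1, hg.1]
    have hrest : w.gaussT f + w.gaussT g < w.val (∑ x ∈
        (Finset.HasAntidiagonal.antidiagonal (a + b)).erase (a, b), f.coeff x.1 * g.coeff x.2) := by
      refine w.val.map_lt_sum hne fun x hx => hf.lt_val_coeff_mul_coeff hg ?_
      obtain ⟨hne', hx'⟩ := Finset.mem_erase.1 hx
      rw [Finset.HasAntidiagonal.mem_antidiagonal] at hx'
      by_contra! hcon
      exact hne' (Prod.ext (by omega) (by omega))
    rw [coeff_mul, ← Finset.add_sum_erase _ _ hab, w.val.map_add_eq_of_lt_left (hv ▸ hrest), hv]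
  have heq : w.gaussT (f * g) = w.gaussT f + w.gaussT g :=
    le_antisymm (htop ▸ w.gaussT_le_val_coeff _ _) hle
  refine ⟨heq, by rw [htop, heq], fun n hn => heq ▸ ?_⟩
  rw [coeff_mul]
  refine w.val.map_lt_sum hne fun x hx => hf.lt_val_coeff_mul_coeff hg ?_
  rw [Finset.HasAntidiagonal.mem_antidiagonal] at hx
  omega

lemma pow (hf : w.IsTopIndex f a) (n : ℕ) : w.IsTopIndex (f ^ n) (n * a) := by
  induction n with
  | zero => simpa using w.isTopIndex_one
  | succ n ih => simpa [pow_succ, add_mul] using (ih.mul hf).2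

end IsTopIndex

lemma gaussT_mul (f g : K[X]) : w.gaussT (f * g) = w.gaussT f + w.gaussT g := by
  by_cases hf : f = 0
  · simp [hf]
  by_cases hg : g = 0
  · simp [hg]
  obtain ⟨a, ha⟩ := w.exists_isTopIndex hf
  obtain ⟨b, hb⟩ := w.exists_isTopIndex hg
  exact (ha.mul hb).1

noncomputable def gaussVal : AddValuation K[X] (WithTop ℚ) :=
  AddValuation.of w.gaussT w.gaussT_zero (by simpa using w.gaussT_C 1) w.min_le_gaussT_add
    w.gaussT_mul

@[simp]
lemma gaussVal_apply (f : K[X]) : w.gaussVal f = w.gaussT f := rfl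

end AddVal

namespace AddValuation

variable {R Γ₀ : Type*} [CommRing R] [LinearOrderedAddCommMonoidWithTop Γ₀]
  (v : AddValuation R Γ₀)

lemma map_natCast_nonneg (n : ℕ) : 0 ≤ v n := by
  induction n with
  | zero => simp
  | succ n ih => rw [Nat.cast_succ]; exact v.map_le_add ih v.map_one.ge

lemma map_prod {ι : Type*} (s : Finset ι) (f : ι → R) :
    v (∏ i ∈ s, f i) = ∑ i ∈ s, v (f i) := by
  classical
  induction s using Finset.induction_on with
  | empty => simp
  | insert a s ha ih => rw [Finset.prod_insert ha, Finset.sum_insert ha, v.map_mul, ih]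

lemma map_nonneg_of_pow_eq_one {μ : R} {n : ℕ} (hn : n ≠ 0) (hμ : μ ^ n = 1) : 0 ≤ v μ :=
  not_lt.1 fun h => (nsmul_neg h hn).ne (by rw [← v.map_pow, hμ, v.map_one])

lemma map_one_sub_le_map_one_sub_pow {μ : R} (hμ : 0 ≤ v μ) (k : ℕ) :
    v (1 - μ) ≤ v (1 - μ ^ k) := by
  rw [← mul_neg_geom_sum, v.map_mul]
  exact le_add_of_nonneg_right (v.map_le_sum fun i _ => by rw [v.map_pow]; exact nsmul_nonneg hμ i)

variable [IsDomain R] {ζ : R} {n : ℕ}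

lemma map_one_sub_eq_of_isPrimitiveRoot [NeZero n] (hζ : IsPrimitiveRoot ζ n) {μ : R}
    (hμ : IsPrimitiveRoot μ n) : v (1 - μ) = v (1 - ζ) := by
  obtain ⟨i, -, rfl⟩ := hζ.eq_pow_of_pow_eq_one hμ.pow_eq_one
  obtain ⟨j, -, hj⟩ := hμ.eq_pow_of_pow_eq_one hζ.pow_eq_one
  have hζ0 := v.map_nonneg_of_pow_eq_one (NeZero.ne n) hζ.pow_eq_one
  have hμ0 := v.map_nonneg_of_pow_eq_one (NeZero.ne n) hμ.pow_eq_one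
  refine le_antisymm ?_ (v.map_one_sub_le_map_one_sub_pow hζ0 i)
  simpa [hj] using v.map_one_sub_le_map_one_sub_pow hμ0 j

lemma map_one_sub_le_map_sub [NeZero n] (hζ : IsPrimitiveRoot ζ n) {μ μ' : R}
    (hμ : μ ^ n = 1) (hμ' : μ' ^ n = 1) : v (1 - ζ) ≤ v (μ - μ') := by
  have hu : (μ * μ' ^ (n - 1)) ^ n = 1 := by
    rw [mul_pow, hμ, one_mul, ← pow_mul, mul_comm, pow_mul, hμ', one_pow]
  obtain ⟨i, -, hi⟩ := hζ.eq_pow_of_pow_eq_one hu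
  have hsub : μ - μ' = -(μ' * (1 - μ * μ' ^ (n - 1))) := by
    have : μ' * μ' ^ (n - 1) = 1 := by
      rw [← pow_succ', Nat.sub_add_cancel NeZero.one_le, hμ']
    linear_combination (-μ) * this
  rw [hsub, v.map_neg, v.map_mul, ← hi]
  exact (v.map_one_sub_le_map_one_sub_pow
    (v.map_nonneg_of_pow_eq_one (NeZero.ne n) hζ.pow_eq_one) i).trans
    (le_add_of_nonneg_left (v.map_nonneg_of_pow_eq_one (NeZero.ne n) hμ'))

lemma map_natCast_eq_nsmul_map_one_sub {p : ℕ} (hp : p.Prime) (hζ : IsPrimitiveRoot ζ p) :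
    v (p : R) = (p - 1) • v (1 - ζ) := by
  have := Fact.mk hp
  have hprod : ∏ μ ∈ primitiveRoots p R, (1 - μ) = p := by
    simpa [Polynomial.cyclotomic_eq_prod_X_sub_primitiveRoots hζ, Polynomial.eval_prod] using
      Polynomial.eval_one_cyclotomic_prime (R := R) (p := p)
  rw [← hprod, v.map_prod, Finset.sum_congr rfl fun μ hμ =>
    v.map_one_sub_eq_of_isPrimitiveRoot hζ ((mem_primitiveRoots hp.pos).1 hμ), Finset.sum_const,
    hζ.card_primitiveRoots, Nat.totient_prime hp]

end AddValuation

lemma AddValuation.nsmul_lt_map_prod_add_sub_pow {R : Type*} [CommRing R]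
    (v : AddValuation R (WithTop ℚ)) {g : R} (hg : v g ≠ ⊤) {ι : Type*} (s : Finset ι)
    {e : ι → R} (he : ∀ i ∈ s, v g < v (e i)) :
    s.card • v g < v (∏ i ∈ s, (g + e i) - g ^ s.card) := by
  classical
  induction s using Finset.induction_on with
  | empty => simp
  | insert a s ha ih =>
    have hn : s.card • v g ≠ ⊤ := by
      lift v g to ℚ using hg with x
      exact WithTop.coe_ne_top
    rw [Finset.prod_insert ha, Finset.card_insert_of_notMem ha, succ_nsmul',
      show (g + e a) * ∏ i ∈ s, (g + e i) - g ^ (s.card + 1) =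
        (g + e a) * (∏ i ∈ s, (g + e i) - g ^ s.card) + e a * g ^ s.card by ring]
    have hga : v (g + e a) = v g := v.map_add_eq_of_lt_left (he a (Finset.mem_insert_self a s))
    refine v.map_lt_add ?_ ?_
    · rw [v.map_mul, hga]
      exact WithTop.add_lt_add_left hg (ih fun i hi => he i (Finset.mem_insert_of_mem hi))
    · rw [v.map_mul, v.map_pow]
      exact WithTop.add_lt_add_right hn (he a (Finset.mem_insert_self a s))

lemma IsPartDecomp.natDegree_lt {p : ℕ} {h q ρ : K[X]} (hd : IsPartDecomp p h q ρ)
    (hp : 0 < p) : ρ.natDegree < p * (h.natDegree / p + 1) := by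
  obtain ⟨hdec, hdq⟩ := hd
  have hqp : (q ^ p).natDegree ≤ h.natDegree :=
    natDegree_pow_le.trans ((Nat.mul_le_mul_left p hdq).trans (Nat.mul_div_le _ _))
  rw [show ρ = h - q ^ p by rw [hdec]; ring]
  exact (natDegree_sub_le _ _).trans_lt ((max_le le_rfl hqp).trans_lt (Nat.lt_mul_div_succ _ hp))

namespace AddVal

variable (w : AddVal K)

lemma tdiff_le_tdiff_iff (h ρ₁ ρ : K[X]) :
    w.tdiff h ρ₁ ≤ w.tdiff h ρ ↔ w.gaussT ρ₁ ≤ w.gaussT ρ := by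
  unfold tdiff gaussT
  by_cases h₁ : ρ₁ = 0 <;> by_cases h₂ : ρ = 0 <;> simp [h₁, h₂]

lemma gaussT_pow_of_eq_add {p : ℕ} {ρ s ρ₀ : K[X]} (hs : ρ = s ^ p + ρ₀)
    (hlt : w.gaussT ρ < w.gaussT ρ₀) : w.gaussT (s ^ p) = w.gaussT ρ := by
  rw [show s ^ p = ρ - ρ₀ by rw [hs]; ring]
  exact w.gaussVal.map_sub_eq_of_lt_left hlt

lemma gaussT_le_gaussT_pow {p : ℕ} {h q ρ : K[X]} (hdec : h = q ^ p + ρ)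
    (hhρ : w.gaussT h ≤ w.gaussT ρ) : w.gaussT h ≤ w.gaussT (q ^ p) := by
  have := w.gaussVal.map_sub h ρ
  rwa [show h - ρ = q ^ p by rw [hdec]; ring, gaussVal_apply, gaussVal_apply, gaussVal_apply,
    min_eq_left hhρ] at this

lemma exists_pow_add_natDegree_le {p N : ℕ} {ρ s ρ₀ : K[X]}
    (hdeg : ρ.natDegree < p * (N + 1)) (hs : ρ = s ^ p + ρ₀) (hlt : w.gaussT ρ < w.gaussT ρ₀) :
    ∃ s' ρ₀', s'.natDegree ≤ N ∧ ρ = s' ^ p + ρ₀' ∧ w.gaussT ρ < w.gaussT ρ₀' := by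
  have hsp := w.gaussT_pow_of_eq_add hs hlt
  have hs0 : s ≠ 0 := by
    rintro rfl
    have hp : p ≠ 0 := by rintro rfl; simp at hdeg
    exact hlt.ne_top (by rw [← hsp, zero_pow hp, gaussT_zero])
  obtain ⟨d, hd⟩ := w.exists_isTopIndex hs0
  -- `ρ` has a coefficient of valuation `v(ρ)` at `p * d`, so `p * d ≤ deg ρ`
  have hdN : d ≤ N := by
    have hcoeff : w.val (ρ.coeff (p * d)) = w.gaussT ρ := by
      rw [show ρ.coeff (p * d) = (s ^ p).coeff (p * d) + ρ₀.coeff (p * d) by rw [hs, coeff_add],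
        w.val.map_add_eq_of_lt_left, (hd.pow p).1, hsp]
      rw [(hd.pow p).1, hsp]
      exact hlt.trans_le (w.gaussT_le_val_coeff _ _)
    have hne : ρ.coeff (p * d) ≠ 0 := fun h0 =>
      hlt.ne_top (by rw [← hcoeff, h0, w.val.map_zero])
    exact Nat.lt_succ_iff.1
      (Nat.lt_of_mul_lt_mul_left ((le_natDegree_of_ne_zero hne).trans_lt hdeg))
  set s₀ := PowerSeries.trunc (N + 1) (s : PowerSeries K)
  have hs₁ : w.gaussT s < w.gaussT (s - s₀) := by
    obtain ⟨i, hi⟩ := w.exists_val_coeff_eq_gaussT (s - s₀)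
    rw [← hi, coeff_sub, PowerSeries.coeff_trunc, Polynomial.coeff_coe]
    split_ifs with hiN
    · rw [sub_self, w.val.map_zero]
      exact (w.gaussT_ne_top hs0).lt_top
    · rw [sub_zero]
      exact hd.2 i (by omega)
  have hs₀ : w.gaussT s₀ = w.gaussT s := by
    simpa using w.gaussVal.map_sub_eq_of_lt_left hs₁
  have hpow := w.gaussVal.nsmul_lt_map_prod_add_sub_pow (g := s₀)
    (by simpa [hs₀] using w.gaussT_ne_top hs0)
    (Finset.range p) (e := fun _ => s - s₀) fun _ _ => by simpa [hs₀] using hs₁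
  simp only [Finset.prod_const, Finset.card_range, add_sub_cancel, gaussVal_apply, hs₀] at hpow
  refine ⟨s₀, ρ₀ + (s ^ p - s₀ ^ p), Nat.lt_succ_iff.1 (PowerSeries.natDegree_trunc_lt _ _),
    by rw [hs]; ring, w.gaussVal.map_lt_add hlt ?_⟩
  rwa [← hsp, ← gaussVal_apply, w.gaussVal.map_pow]

lemma gaussT_lt_add_pow_sub_pow_sub_pow {p : ℕ} (hp : p.Prime) (hp0 : (p : K) ≠ 0)
    {h ρ q s : K[X]} (hρ : ρ ≠ 0) (hhρ : w.gaussT h ≤ w.gaussT ρ)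
    (hq : w.gaussT h ≤ w.gaussT (q ^ p)) (hs : w.gaussT (s ^ p) = w.gaussT ρ)
    (ht : w.gauss ρ - w.gauss h < pBound w p) :
    w.gaussT ρ < w.gaussT ((q + s) ^ p - q ^ p - s ^ p) := by
  have hh : h ≠ 0 := fun h0 => w.gaussT_ne_top hρ (top_le_iff.1 (by simpa [h0] using hhρ))
  have hs0 : s ≠ 0 := by
    rintro rfl
    simp only [zero_pow hp.ne_zero, gaussT_zero] at hs
    exact w.gaussT_ne_top hρ hs.symm
  rw [← w.gaussVal_apply (q ^ p), w.gaussVal.map_pow, gaussVal_apply] at hq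
  rw [← w.gaussVal_apply (s ^ p), w.gaussVal.map_pow, gaussVal_apply] at hs
  rw [show (q + s) ^ p - q ^ p - s ^ p = ↑p * ∑ k ∈ Finset.Ioo 0 p, q ^ k * s ^ (p - k) *
    ↑(p.choose k / p) by rw [add_pow_prime_eq' hp]; ring, Finset.mul_sum, ← gaussVal_apply]
  refine w.gaussVal.map_lt_sum (w.gaussT_ne_top hρ) fun k hk => ?_
  obtain ⟨hk0, hkp⟩ := Finset.mem_Ioo.1 hk
  by_cases hq0 : q = 0
  · simpa [hq0, zero_pow hk0.ne'] using (w.gaussT_ne_top hρ).lt_top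
  have hpv : w.gaussVal (p : K[X]) = w.v p := by
    rw [← map_natCast C, gaussVal_apply, gaussT_C, val_of_ne_zero _ hp0]
  rw [w.gaussVal.map_mul, w.gaussVal.map_mul, w.gaussVal.map_mul, w.gaussVal.map_pow,
    w.gaussVal.map_pow, hpv]
  refine lt_of_lt_of_le ?_
    (add_le_add le_rfl (le_add_of_nonneg_right (w.gaussVal.map_natCast_nonneg _)))
  simp only [gaussVal_apply]
  rw [w.gaussT_of_ne_zero hρ, w.gaussT_of_ne_zero hh, w.gaussT_of_ne_zero hq0,
    w.gaussT_of_ne_zero hs0] at *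
  rw [pBound, lt_div_iff₀ (sub_pos.2 (by exact_mod_cast hp.one_lt : (1 : ℚ) < p))] at ht
  norm_cast at hq hs hhρ ⊢
  rw [nsmul_eq_mul] at hq hs
  rw [nsmul_eq_mul, nsmul_eq_mul, Nat.cast_sub hkp.le]
  have hk : (k : ℚ) ≤ p - 1 := by
    have : (k : ℚ) + 1 ≤ p := by exact_mod_cast hkp
    linarith
  have hk1 : (1 : ℚ) ≤ k := by exact_mod_cast hk0
  nlinarith [mul_le_mul_of_nonneg_right hk (sub_nonneg.2 hhρ)]

theorem exists_isPartDecomp_gaussT_lt {p : ℕ} (hp : p.Prime) (hp0 : (p : K) ≠ 0)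
    {h q ρ s ρ₀ : K[X]} (hd : IsPartDecomp p h q ρ) (ht : w.gauss ρ - w.gauss h < pBound w p)
    (hs : ρ = s ^ p + ρ₀) (hlt : w.gaussT ρ < w.gaussT ρ₀) :
    ∃ q₁ ρ₁, IsPartDecomp p h q₁ ρ₁ ∧ w.gaussT ρ < w.gaussT ρ₁ := by
  rcases lt_or_ge (w.gaussT ρ) (w.gaussT h) with hρh | hhρ
  · exact ⟨0, h, ⟨by rw [zero_pow hp.ne_zero, zero_add], by simp⟩, hρh⟩
  obtain ⟨s', ρ₀', hs'deg, hs', hlt'⟩ :=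
    w.exists_pow_add_natDegree_le (hd.natDegree_lt hp.pos) hs hlt
  refine ⟨q + s', ρ₀' - ((q + s') ^ p - q ^ p - s' ^ p), ⟨by rw [hd.1, hs']; ring,
    (natDegree_add_le _ _).trans (max_le hd.2 hs'deg)⟩, ?_⟩
  rw [sub_eq_add_neg, ← gaussVal_apply]
  refine w.gaussVal.map_lt_add hlt' ?_
  rw [w.gaussVal.map_neg]
  exact w.gaussT_lt_add_pow_sub_pow_sub_pow hp hp0 (fun h0 => by simp [h0] at hlt) hhρ
    (w.gaussT_le_gaussT_pow hd.1 hhρ) (w.gaussT_pow_of_eq_add hs' hlt') ht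

lemma pBound_le_gauss_sub_gauss {p : ℕ} (hp : p.Prime) {ζ : K} (hζ : IsPrimitiveRoot ζ p)
    {h ρ : K[X]} (hh : h ≠ 0) (hρ : ρ ≠ 0)
    (hle : p • w.gaussVal (1 - C ζ) + w.gaussT h ≤ w.gaussT ρ) :
    pBound w p ≤ w.gauss ρ - w.gauss h := by
  have := NeZero.mk hp.ne_zero
  have hp0 : (p : K) ≠ 0 := (hζ.neZero').out
  have hlam : w.gaussVal (1 - C ζ) = w.v (1 - ζ) := by
    rw [← C_1, ← C_sub, gaussVal_apply, gaussT_C,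
      val_of_ne_zero _ (sub_ne_zero.2 (hζ.ne_one hp.one_lt).symm)]
  have hV := w.gaussVal.map_natCast_eq_nsmul_map_one_sub hp (hζ.map_of_injective C_injective)
  rw [← map_natCast C, gaussVal_apply, gaussT_C, val_of_ne_zero _ hp0, hlam] at hV
  rw [hlam, w.gaussT_of_ne_zero hh, w.gaussT_of_ne_zero hρ] at hle
  norm_cast at hle hV
  rw [nsmul_eq_mul] at hle hV
  rw [pBound, hV, Nat.cast_sub hp.one_le, Nat.cast_one, mul_left_comm,
    mul_div_cancel_left₀ _ (sub_pos.2 (by exact_mod_cast hp.one_lt : (1 : ℚ) < p)).ne']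
  linarith

theorem exists_pow_add_of_gaussT_le {p : ℕ} (hp : p.Prime) {ζ : K} (hζ : IsPrimitiveRoot ζ p)
    {h q ρ q₁ ρ₁ : K[X]} (hdec : h = q ^ p + ρ) (hdec₁ : h = q₁ ^ p + ρ₁)
    (hhρ : w.gaussT h ≤ w.gaussT ρ) (ht : w.gauss ρ - w.gauss h < pBound w p)
    (hlt : w.gaussT ρ < w.gaussT ρ₁) :
    ∃ s ρ₀, ρ = s ^ p + ρ₀ ∧ w.gaussT ρ < w.gaussT ρ₀ := by
  have := NeZero.mk hp.ne_zero
  set v := w.gaussVal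
  have hCζ : IsPrimitiveRoot (C ζ) p := hζ.map_of_injective C_injective
  set S := nthRootsFinset p (1 : K[X])
  have hS : ∀ μ ∈ S, μ ^ p = 1 := fun μ hμ => (mem_nthRootsFinset hp.pos 1).1 hμ
  have hSc : S.card = p := hCζ.card_nthRootsFinset
  set δ : K[X] → K[X] := fun μ => q₁ - μ * q
  have hvprod : v (∏ μ ∈ S, δ μ) = v ρ := by
    rw [← hCζ.pow_sub_pow_eq_prod_sub_mul q₁ q hp.pos,
      show q₁ ^ p - q ^ p = ρ - ρ₁ by linear_combination hdec - hdec₁]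
    exact v.map_sub_eq_of_lt_left hlt
  obtain ⟨μ₀, hμ₀, hmin⟩ := S.exists_min_image (fun μ => v (δ μ))
    ⟨1, (mem_nthRootsFinset hp.pos 1).2 (one_pow p)⟩
  have he : ∀ μ ∈ S, v (1 - C ζ) + v q ≤ v ((μ₀ - μ) * q) := fun μ hμ => by
    rw [v.map_mul]
    exact add_le_add (v.map_one_sub_le_map_sub hCζ (hS μ₀ hμ₀) (hS μ hμ)) le_rfl
  rcases lt_or_ge (v (δ μ₀)) (v (1 - C ζ) + v q) with hsmall | hlarge
  · -- each `δ μ` is `δ μ₀` plus a term of larger valuation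
    have hpow := v.nsmul_lt_map_prod_add_sub_pow hsmall.ne_top S (e := fun μ => (μ₀ - μ) * q)
      fun μ hμ => hsmall.trans_le (he μ hμ)
    simp only [hSc, show ∀ μ, δ μ₀ + (μ₀ - μ) * q = δ μ from
      fun μ => by simp only [δ]; ring] at hpow
    have hρ : v ρ = p • v (δ μ₀) := by
      rw [← hvprod, ← v.map_pow,
        show ∏ μ ∈ S, δ μ = δ μ₀ ^ p + (∏ μ ∈ S, δ μ - δ μ₀ ^ p) by ring,
        v.map_add_eq_of_lt_left (by rwa [v.map_pow])]
    refine ⟨δ μ₀, (∏ μ ∈ S, δ μ - δ μ₀ ^ p) + ρ₁, ?_, v.map_lt_add ?_ hlt⟩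
    · rw [← hCζ.pow_sub_pow_eq_prod_sub_mul q₁ q hp.pos]
      linear_combination hdec₁ - hdec
    · rwa [← gaussVal_apply, hρ]
  · -- otherwise `v(ρ) - v(h) ≥ p v(1 - ζ) = p v(p) / (p - 1)`
    exfalso
    have key : p • v (1 - C ζ) + v h ≤ v ρ := calc
      p • v (1 - C ζ) + v h ≤ p • (v (1 - C ζ) + v q) := by
          rw [nsmul_add, ← v.map_pow q p]
          exact add_le_add le_rfl (w.gaussT_le_gaussT_pow hdec hhρ)
      _ ≤ p • v (δ μ₀) := nsmul_le_nsmul_right hlarge p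
      _ = ∑ μ ∈ S, v (δ μ₀) := by rw [Finset.sum_const, hSc]
      _ ≤ ∑ μ ∈ S, v (δ μ) := Finset.sum_le_sum hmin
      _ = v ρ := by rw [← v.map_prod, hvprod]
    have hρ0 : ρ ≠ 0 := fun h0 => by simp [h0] at hlt
    have hh0 : h ≠ 0 := fun h0 => w.gaussT_ne_top hρ0 (top_le_iff.1 (by simpa [h0] using hhρ))
    exact ht.not_ge (w.pBound_le_gauss_sub_gauss hp hζ hh0 hρ0 key)

theorem exists_pow_add_gaussT_lt [IsAlgClosed K] {p : ℕ} (hp : p.Prime) {ζ : K}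
    (hζ : IsPrimitiveRoot ζ p) {h q ρ q₁ ρ₁ : K[X]} (hdec : h = q ^ p + ρ)
    (hdec₁ : h = q₁ ^ p + ρ₁) (ht : w.gauss ρ - w.gauss h < pBound w p)
    (hlt : w.gaussT ρ < w.gaussT ρ₁) :
    ∃ s ρ₀, ρ = s ^ p + ρ₀ ∧ w.gaussT ρ < w.gaussT ρ₀ := by
  rcases lt_or_ge (w.gaussT ρ) (w.gaussT h) with hρh | hhρ
  · obtain ⟨ω, hω⟩ := IsAlgClosed.exists_pow_nat_eq (-1 : K) hp.pos
    refine ⟨C ω * q, h, ?_, hρh⟩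
    rw [mul_pow, ← C_pow, hω, C_neg, C_1, hdec]
    ring
  · exact w.exists_pow_add_of_gaussT_le hp hζ hdec hdec₁ hhρ ht hlt

end AddVal

/-- Over an algebraically closed field the normalized reduction of `ρ` is a `p`-th power exactly
when `ρ = s^p + ρ₀` with `v(ρ₀) > v(ρ)`; this is the form of the right-hand side. -/
theorem statement3_general {K : Type*} [Field K] [IsAlgClosed K]
    (w : AddVal K) (p : ℕ) (hp : p.Prime) (ζ : K) (hζ : IsPrimitiveRoot ζ p)
    (h q ρ : K[X]) (hd : IsPartDecomp p h q ρ)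
    (ht : w.gauss ρ - w.gauss h < pBound w p) :
    (∀ q₁ ρ₁ : K[X], IsPartDecomp p h q₁ ρ₁ → w.tdiff h ρ₁ ≤ w.tdiff h ρ)
      ↔ ¬ ∃ s ρ₀ : K[X], ρ = s ^ p + ρ₀ ∧ w.gaussT ρ < w.gaussT ρ₀ := by
  have := NeZero.mk hp.ne_zero
  simp only [w.tdiff_le_tdiff_iff]
  constructor
  · rintro hmax ⟨s, ρ₀, hs, hlt⟩
    obtain ⟨q₁, ρ₁, hd₁, hlt₁⟩ :=
      w.exists_isPartDecomp_gaussT_lt hp hζ.neZero'.out hd ht hs hlt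
    exact (hmax q₁ ρ₁ hd₁).not_gt hlt₁
  · rintro hnot q₁ ρ₁ ⟨hdec₁, -⟩
    by_contra! hlt
    exact hnot (w.exists_pow_add_gaussT_lt hp hζ hd.1 hdec₁ ht hlt)

/-- Proposition 4.6: a part-`p`-th-power decomposition `h = q^p + ρ` with
`t = v(ρ) - v(h) < p·v(p)/(p-1)` admits no decomposition with strictly larger `t` if and
only if the normalized reduction of `ρ` is not a `p`-th power over the residue field.
Since the base field is algebraically closed (so its value group is divisible and its
residue field is algebraically closed), the normalized reduction of `ρ` being a `p`-th
power over the residue field is equivalent to the existence of `s, ρ₀` with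
`ρ = s^p + ρ₀` and `v(ρ₀) > v(ρ)`, which is the formulation used here. -/
theorem statement3 {K : Type*} [Field K] [CharZero K] [IsAlgClosed K]
    (w : AddVal K) (p : ℕ) (hp : p.Prime) (ζ : K) (hζ : IsPrimitiveRoot ζ p)
    (h q ρ : K[X]) (hh : h ≠ 0) (hρ : ρ ≠ 0) (hd : IsPartDecomp p h q ρ)
    (ht : w.gauss ρ - w.gauss h < pBound w p) :
    (∀ q₁ ρ₁ : K[X], IsPartDecomp p h q₁ ρ₁ → w.tdiff h ρ₁ ≤ w.tdiff h ρ)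
      ↔ ¬ ∃ s ρ₀ : K[X], ρ = s ^ p + ρ₀ ∧ w.gaussT ρ < w.gaussT ρ₀ :=
  statement3_general w p hp ζ hζ h q ρ hd ht
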